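/- Let γ < ω^ω and let α ≤ γ with CB(α) ≠ 0. Then the set T(α) = {β : β <* α} ∪ {α}, considered as a subspace of γ with the order topology, is order-isomorphic via a homeomorphism to the ordinal ω^{CB(α)} + 1. -/

import Mathlib

open Ordinal Set

/-- Cantor–Bendixson rank of an ordinal: the exponent of the last term of its
Cantor normal form, with `CB 0 = 0`. -/
noncomputable def CB (o : Ordinal) : Ordinal :=
  ((Ordinal.CNF Ordinal.omega0 o).getLast?.map Prod.fst).getD 0

/-- `X` is a closed copy of the ordinal `β`: there is an order isomorphism onto
`Iio β` (with the topology induced from the order topology on `Ordinal`) which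
is a homeomorphism. -/
def IsClosedCopy (X : Set Ordinal) (β : Ordinal) : Prop :=
  ∃ f : X ≃o (Set.Iio β), Continuous f ∧ Continuous f.symm

/-- `X` is homogeneous of color `i` for the pair coloring `c`. -/
def Homog (c : Ordinal → Ordinal → Fin 2) (X : Set Ordinal) (i : Fin 2) : Prop :=
  ∀ x ∈ X, ∀ y ∈ X, x < y → c x y = i

/-- The closed partition relation `γ →_cl (α,β)²`. -/
def ClPartition (γ α β : Ordinal) : Prop :=
  ∀ c : Ordinal → Ordinal → Fin 2,
    (∃ X ⊆ Set.Iio γ, IsClosedCopy X α ∧ Homog c X 0) ∨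
    (∃ X ⊆ Set.Iio γ, IsClosedCopy X β ∧ Homog c X 1)

/-- `X` is an order-isomorphic copy of the ordinal `β`. -/
def IsOrderCopy (X : Set Ordinal) (β : Ordinal) : Prop :=
  Nonempty (X ≃o Set.Iio β)

/-- The classical partition relation `γ → (α,β)²`. -/
def ClassPartition (γ α β : Ordinal) : Prop :=
  ∀ c : Ordinal → Ordinal → Fin 2,
    (∃ X ⊆ Set.Iio γ, IsOrderCopy X α ∧ Homog c X 0) ∨
    (∃ X ⊆ Set.Iio γ, IsOrderCopy X β ∧ Homog c X 1)

/-- The ordinal Ramsey number `R(α,β)`: least `γ` with `γ → (α,β)²`. -/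
noncomputable def Rord (α β : Ordinal) : Ordinal := sInf {γ | ClassPartition γ α β}

/-- The closed Ramsey number `R^cl(α,β)`: least `γ` with `γ →_cl (α,β)²`. -/
noncomputable def Rcl (α β : Ordinal) : Ordinal := sInf {γ | ClPartition γ α β}

/-- The first uncountable ordinal. -/
noncomputable def omega1 : Ordinal := (Cardinal.aleph 1).ord

/-- One step of the relation `<*`: `α = β + ω^δ` for some `δ > CB β`. -/
def stepRel (β α : Ordinal) : Prop := ∃ δ : Ordinal, CB β < δ ∧ α = β + Ordinal.omega0 ^ δ

/-- The strict partial order `<*` generated by `stepRel`. -/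
def ltStar : Ordinal → Ordinal → Prop := Relation.TransGen stepRel

/-- The reflexive partial order `≤*`. -/
def leStar : Ordinal → Ordinal → Prop := Relation.ReflTransGen stepRel

/-- `T(α) = {β : β <* α} ∪ {α}`, the subtree below the vertex `α`. -/
def Tset (α : Ordinal) : Set Ordinal := {β | ltStar β α} ∪ {α}

/-!
The one-step relation generating `<*` is already transitive, since `β + ω^δ + ω^ε = β + ω^ε`
for `δ < ε`, and the exponent of a step into `α` is forced to be `CB α`. Hence `T(α)` consists
of `α` and the `β` with `β + ω^{CB α} = α` and `CB β < CB α`. This set is closed upwards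
below `α`, so it is an interval `[ν, ν + ω^{CB α}]`. Translation by `ν` is an order isomorphism
from `ω^{CB α} + 1`, and an order isomorphism between order-convex sets of ordinals is a
homeomorphism.
-/

namespace Ordinal

theorem foldr_opow_mul_add_eq_add (b z : Ordinal) (l : List (Ordinal × Ordinal)) :
    l.foldr (fun p r ↦ b ^ p.1 * p.2 + r) z = l.foldr (fun p r ↦ b ^ p.1 * p.2 + r) 0 + z := by
  induction l with
  | nil => simp
  | cons p l ih => simp only [List.foldr_cons, ih, add_assoc]

theorem omega0_opow_dvd_add_omega0_opow (x e : Ordinal) : ω ^ e ∣ x + ω ^ e := by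
  have hlt : x % ω ^ e < ω ^ e := mod_lt x (opow_ne_zero e omega0_ne_zero)
  refine ⟨x / ω ^ e + 1, ?_⟩
  conv_lhs => rw [← div_add_mod x (ω ^ e), add_assoc, add_omega0_opow hlt]
  rw [mul_add_one]

theorem not_omega0_opow_succ_dvd_add_omega0_opow (x e : Ordinal) :
    ¬ ω ^ Order.succ e ∣ x + ω ^ e := by
  have hpos : (0 : Ordinal) < ω ^ Order.succ e := opow_pos _ omega0_pos
  have hlt : x % ω ^ Order.succ e + ω ^ e < ω ^ Order.succ e :=
    isPrincipal_add_omega0_opow _ (mod_lt x hpos.ne')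
      ((opow_lt_opow_iff_right one_lt_omega0).2 (Order.lt_succ e))
  rw [dvd_iff_mod_eq_zero, ← div_add_mod x (ω ^ Order.succ e), add_assoc, mul_add_mod_self,
    mod_eq_of_lt hlt]
  exact ((opow_pos e omega0_pos).trans_le le_add_self).ne'

theorem eq_of_add_omega0_opow_eq {x y δ ε : Ordinal} (h : x + ω ^ δ = y + ω ^ ε) : δ = ε := by
  have key : ∀ {x y δ ε : Ordinal}, x + ω ^ δ = y + ω ^ ε → ¬ δ < ε := fun h hlt ↦
    not_omega0_opow_succ_dvd_add_omega0_opow _ _ <| h ▸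
      (opow_dvd_opow ω (Order.succ_le_of_lt hlt)).trans (omega0_opow_dvd_add_omega0_opow _ _)
  exact le_antisymm (not_lt.1 (key h.symm)) (not_lt.1 (key h))

end Ordinal

lemma CB_zero : CB 0 = 0 := by simp [CB]

lemma exists_add_omega0_opow_CB {o : Ordinal} (ho : o ≠ 0) : ∃ x, x + ω ^ CB o = o := by
  obtain hnil | ⟨l, p, hl⟩ := (CNF ω o).eq_nil_or_concat'
  · exact absurd (by simpa [hnil] using (CNF.foldr ω o).symm) ho
  have hp : p ∈ CNF ω o := hl ▸ List.mem_concat_self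
  obtain ⟨n, hn⟩ := lt_omega0.1 (CNF.snd_lt one_lt_omega0 hp)
  obtain ⟨m, rfl⟩ : ∃ m, n = m + 1 :=
    Nat.exists_eq_add_one.2 (by exact_mod_cast hn ▸ CNF.snd_pos hp)
  have hCB : CB o = p.1 := by simp [CB, hl]
  refine ⟨l.foldr (fun p r ↦ ω ^ p.1 * p.2 + r) 0 + ω ^ p.1 * m, ?_⟩
  conv_rhs => rw [← CNF.foldr ω o, hl, List.foldr_append, List.foldr_cons, List.foldr_nil,
    foldr_opow_mul_add_eq_add, hn]
  rw [hCB, add_zero, add_assoc, Nat.cast_add_one, mul_add_one]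

lemma CB_add_omega0_opow (x δ : Ordinal) : CB (x + ω ^ δ) = δ := by
  obtain ⟨y, hy⟩ := exists_add_omega0_opow_CB (o := x + ω ^ δ)
    ((opow_pos δ omega0_pos).trans_le le_add_self).ne'
  exact eq_of_add_omega0_opow_eq hy

lemma CB_add {a b : Ordinal} (hb : b ≠ 0) : CB (a + b) = CB b := by
  obtain ⟨x, hx⟩ := exists_add_omega0_opow_CB hb
  rw [← hx, ← add_assoc, CB_add_omega0_opow, CB_add_omega0_opow]

lemma CB_add_one (x : Ordinal) : CB (x + 1) = 0 := by
  simpa using CB_add_omega0_opow x 0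

lemma CB_lt_of_lt_omega0_opow {o e : Ordinal} (ho : o ≠ 0) (h : o < ω ^ e) : CB o < e := by
  obtain ⟨x, hx⟩ := exists_add_omega0_opow_CB ho
  exact (opow_lt_opow_iff_right one_lt_omega0).1 (le_add_self.trans_lt (hx ▸ h))

lemma stepRel_iff {β α : Ordinal} : stepRel β α ↔ CB β < CB α ∧ β + ω ^ CB α = α := by
  constructor
  · rintro ⟨δ, hδ, rfl⟩
    rw [CB_add_omega0_opow]
    exact ⟨hδ, rfl⟩
  · rintro ⟨hlt, h⟩
    exact ⟨CB α, hlt, h.symm⟩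

instance : IsTrans Ordinal stepRel where
  trans _ _ _ := by
    rintro ⟨δ, hδ, rfl⟩ ⟨ε, hε, rfl⟩
    rw [CB_add_omega0_opow] at hε
    refine ⟨ε, hδ.trans hε, ?_⟩
    rw [add_assoc, add_omega0_opow ((opow_lt_opow_iff_right one_lt_omega0).2 hε)]

lemma ltStar_eq_stepRel : ltStar = stepRel :=
  Relation.transGen_eq_self

lemma mem_Tset_iff {α β : Ordinal} :
    β ∈ Tset α ↔ β = α ∨ CB β < CB α ∧ β + ω ^ CB α = α := by
  rw [Tset, mem_union, mem_singleton_iff, mem_ofPred_eq, ltStar_eq_stepRel, stepRel_iff, or_comm]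

lemma le_of_mem_Tset {α β : Ordinal} (h : β ∈ Tset α) : β ≤ α := by
  rcases mem_Tset_iff.1 h with rfl | ⟨-, h⟩
  exacts [le_rfl, h ▸ le_self_add]

lemma mem_Tset_of_le {α β β' : Ordinal} (hβ : β ∈ Tset α) (hββ' : β ≤ β') (hβ'α : β' ≤ α) :
    β' ∈ Tset α := by
  rcases mem_Tset_iff.1 hβ with rfl | ⟨-, hα⟩
  · rwa [le_antisymm hβ'α hββ']
  rcases hββ'.eq_or_lt with rfl | hββ'
  · exact hβ
  rcases hβ'α.eq_or_lt with rfl | hβ'α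
  · exact mem_Tset_iff.2 (Or.inl rfl)
  obtain ⟨t, rfl⟩ : ∃ t, β + t = β' := ⟨β' - β, Ordinal.add_sub_cancel_of_le hββ'.le⟩
  have ht0 : t ≠ 0 := by rintro rfl; exact hββ'.ne (add_zero β).symm
  have ht : t < ω ^ CB α := by rwa [← hα, add_lt_add_iff_left] at hβ'α
  refine mem_Tset_iff.2 (Or.inr ⟨?_, ?_⟩)
  · rw [CB_add ht0]
    exact CB_lt_of_lt_omega0_opow ht0 ht
  · rw [add_assoc, add_omega0_opow ht, hα]

lemma exists_Tset_eq_Icc {α : Ordinal} (hα : CB α ≠ 0) :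
    ∃ ν, Tset α = Icc ν (ν + ω ^ CB α) := by
  have hα0 : α ≠ 0 := by rintro rfl; exact hα CB_zero
  have hone : 1 < ω ^ CB α := by
    simpa using (opow_lt_opow_iff_right one_lt_omega0).2 (pos_iff_ne_zero.2 hα)
  obtain ⟨x, hx⟩ := exists_add_omega0_opow_CB hα0
  have hx1 : x + 1 ∈ Tset α := by
    refine mem_Tset_iff.2 (Or.inr ⟨?_, ?_⟩)
    · rw [CB_add_one]
      exact pos_iff_ne_zero.2 hα
    · rw [add_assoc, add_omega0_opow hone, hx]
  have hν : sInf (Tset α) ∈ Tset α := csInf_mem ⟨α, mem_Tset_iff.2 (Or.inl rfl)⟩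
  have hνα : sInf (Tset α) ≠ α := by
    refine ((csInf_le' hx1).trans_lt ?_).ne
    rw [← hx]
    exact add_lt_add_right hone x
  refine ⟨sInf (Tset α), ?_⟩
  rw [((mem_Tset_iff.1 hν).resolve_left hνα).2]
  ext β
  exact ⟨fun h ↦ ⟨csInf_le' h, le_of_mem_Tset h⟩, fun h ↦ mem_Tset_of_le hν h.1 h.2⟩

lemma isClosedCopy_of_orderIso {X : Set Ordinal} [X.OrdConnected] {β : Ordinal}
    (f : X ≃o Iio β) : IsClosedCopy X β :=
  ⟨f, f.continuous, f.symm.continuous⟩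

lemma isClosedCopy_Icc_add (ν x : Ordinal) : IsClosedCopy (Icc ν (ν + x)) (x + 1) := by
  let g : Iio (x + 1) → Icc ν (ν + x) := fun t ↦
    ⟨ν + t, le_self_add, add_le_add_right (Order.lt_add_one_iff.1 t.2) ν⟩
  have hg : StrictMono g := fun _ _ hst ↦ add_lt_add_right (Subtype.coe_lt_coe.2 hst) ν
  have hsurj : Function.Surjective g := fun β ↦
    ⟨⟨β - ν, Order.lt_add_one_iff.2 (sub_le.2 β.2.2)⟩,
      Subtype.ext (Ordinal.add_sub_cancel_of_le β.2.1)⟩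
  exact isClosedCopy_of_orderIso (hg.orderIsoOfSurjective g hsurj).symm

theorem stmt_16_general (α : Ordinal) (hCB : CB α ≠ 0) :
    IsClosedCopy (Tset α) (Ordinal.omega0 ^ CB α + 1) := by
  obtain ⟨ν, hT⟩ := exists_Tset_eq_Icc hCB
  rw [hT]
  exact isClosedCopy_Icc_add ν _

/-- For `γ < ω^ω`, `α ≤ γ` with `CB α ≠ 0`, the set `T(α)` is order-isomorphic
via a homeomorphism to the ordinal `ω^{CB α} + 1`. -/
theorem stmt_16 (γ α : Ordinal) (hγ : γ < Ordinal.omega0 ^ Ordinal.omega0)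
    (hα : α ≤ γ) (hCB : CB α ≠ 0) :
    IsClosedCopy (Tset α) (Ordinal.omega0 ^ CB α + 1) :=
  stmt_16_general α hCB
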